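/- arXiv:2301.03676 — 2 statements merged into one kernel-verified Lean document; each statement's English description precedes it below -/
import Mathlib

section
/- The abelianization of π₁(Σ₁) is the trivial group (i.e., Σ₁ is a homology 3-sphere). -/
/-!
`H₁(Σ₁)` is generated by the images of the generators `x, y` of `G_{3,5}` and `x', y'` of
`G_{2,7}`. In additive notation the torus-knot relators give `3x = 5y` and `2x' = 7y'`, and
gluing meridian to meridian and longitude to the inverse of meridian·longitude gives
`2x - 3y = x' - 3y'` and `-27x + 45y = 11x' - 39y'`. This integer system is unimodular, so all
four generators vanish.
-/

open Matrix

noncomputable section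

/-- `SU(2)`: 2×2 special unitary complex matrices. -/
abbrev SU2 : Type := Matrix.specialUnitaryGroup (Fin 2) ℂ

namespace CS

noncomputable instance : Group SU2 :=
  { (inferInstance : Monoid SU2) with
    inv := fun A => ⟨star (A : Matrix (Fin 2) (Fin 2) ℂ), by
      rcases Submonoid.mem_inf.mp A.2 with ⟨h1, h2⟩
      refine Submonoid.mem_inf.mpr ⟨Unitary.star_mem h1, ?_⟩
      have hdet : (star (A : Matrix (Fin 2) (Fin 2) ℂ)).det = star ((A : Matrix (Fin 2) (Fin 2) ℂ).det) := by
        simp [Matrix.star_eq_conjTranspose, Matrix.det_conjTranspose]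
      have h2' : (A : Matrix (Fin 2) (Fin 2) ℂ).det = 1 := h2
      have : (star (A : Matrix (Fin 2) (Fin 2) ℂ)).det = 1 := by rw [hdet, h2', star_one]
      simpa only [MonoidHom.mem_mker, ← Matrix.coe_detMonoidHom] using this⟩
    inv_mul_cancel := fun A => Subtype.ext (Submonoid.mem_inf.mp A.2).1.1 }

/-- The topology of pointwise convergence on the space of representations. -/
instance repTop (G : Type*) [Group G] : TopologicalSpace (G →* SU2) :=
  TopologicalSpace.induced (fun ρ => (ρ : G → SU2)) inferInstance

/-- Conjugation equivalence of representations. -/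
def conjSetoid (G : Type*) [Group G] : Setoid (G →* SU2) where
  r ρ σ := ∃ u : SU2, ∀ g, σ g = u * ρ g * u⁻¹
  iseqv := by
    refine ⟨fun ρ => ⟨1, by simp⟩, ?_, ?_⟩
    · rintro ρ σ ⟨u, h⟩
      exact ⟨u⁻¹, fun g => by rw [h g]; group⟩
    · rintro ρ σ τ ⟨u, h⟩ ⟨v, h'⟩
      exact ⟨v * u, fun g => by rw [h' g, h g]; group⟩

/-- The `SU(2)` character variety of a group `G`. -/
abbrev CharVar (G : Type*) [Group G] : Type _ := Quotient (conjSetoid G)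

/-- The conjugacy class of a representation. -/
abbrev charCl {G : Type*} [Group G] (ρ : G →* SU2) : CharVar G :=
  Quotient.mk (conjSetoid G) ρ

/-- A representation is abelian if its image is abelian. -/
def IsAbelianRep {G : Type*} [Group G] (ρ : G →* SU2) : Prop :=
  ∀ g h : G, Commute (ρ g) (ρ h)

/-- A representation is irreducible if its image is a non-abelian subgroup of `SU(2)`. -/
def IsIrrep {G : Type*} [Group G] (ρ : G →* SU2) : Prop :=
  ¬ IsAbelianRep ρ

/-- The irreducible part `χ*(G)` of the character variety. -/
abbrev CharVarIrr (G : Type*) [Group G] : Type _ :=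
  {c : CharVar G // ∃ ρ : G →* SU2, IsIrrep ρ ∧ c = charCl ρ}

end CS
namespace CS

/-- `su(2)`: trace-zero skew-adjoint 2×2 complex matrices, as a real vector space. -/
def su2 : Submodule ℝ (Matrix (Fin 2) (Fin 2) ℂ) where
  carrier := {A | Aᴴ = -A ∧ A.trace = 0}
  add_mem' := by
    rintro A B ⟨hA1, hA2⟩ ⟨hB1, hB2⟩
    refine ⟨?_, ?_⟩
    · rw [Matrix.conjTranspose_add, hA1, hB1, neg_add]
    · rw [Matrix.trace_add, hA2, hB2, add_zero]
  zero_mem' := by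
    constructor <;> simp
  smul_mem' := by
    rintro c A ⟨hA1, hA2⟩
    refine ⟨?_, ?_⟩
    · rw [Matrix.conjTranspose_smul, hA1, smul_neg, star_trivial]
    · rw [Matrix.trace_smul, hA2, smul_zero]

variable {G : Type*} [Group G]

/-- The adjoint action of a representation on 2×2 matrices: `g · v = ρ(g) v ρ(g)⁻¹`. -/
def adAct (ρ : G →* SU2) (g : G) (A : Matrix (Fin 2) (Fin 2) ℂ) : Matrix (Fin 2) (Fin 2) ℂ :=
  (ρ g : Matrix (Fin 2) (Fin 2) ℂ) * A * ((ρ g⁻¹ : SU2) : Matrix (Fin 2) (Fin 2) ℂ)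

lemma adAct_add (ρ : G →* SU2) (g : G) (A B : Matrix (Fin 2) (Fin 2) ℂ) :
    adAct ρ g (A + B) = adAct ρ g A + adAct ρ g B := by
  simp [adAct, Matrix.add_mul, Matrix.mul_add]

lemma adAct_smul (ρ : G →* SU2) (g : G) (c : ℝ) (A : Matrix (Fin 2) (Fin 2) ℂ) :
    adAct ρ g (c • A) = c • adAct ρ g A := by
  simp [adAct, Matrix.smul_mul, Matrix.mul_smul]

/-- The space of 1-cocycles of `G` with coefficients in `su(2)` twisted by `ad ρ`. -/
def oneCocyclesAd (ρ : G →* SU2) : Submodule ℝ (G → Matrix (Fin 2) (Fin 2) ℂ) where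
  carrier := {f | (∀ g, f g ∈ su2) ∧ ∀ g h, f (g * h) = f g + adAct ρ g (f h)}
  add_mem' := by
    rintro f f' ⟨hf1, hf2⟩ ⟨hf'1, hf'2⟩
    refine ⟨fun g => su2.add_mem (hf1 g) (hf'1 g), fun g h => ?_⟩
    simp only [Pi.add_apply, hf2 g h, hf'2 g h, adAct_add]
    abel
  zero_mem' := by
    refine ⟨fun g => su2.zero_mem, fun g h => ?_⟩
    simp [adAct]
  smul_mem' := by
    rintro c f ⟨hf1, hf2⟩
    refine ⟨fun g => su2.smul_mem c (hf1 g), fun g h => ?_⟩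
    simp only [Pi.smul_apply, hf2 g h, adAct_smul, smul_add]

/-- The space of 1-coboundaries of `G` with coefficients in `su(2)` twisted by `ad ρ`. -/
def oneCoboundariesAd (ρ : G →* SU2) : Submodule ℝ (G → Matrix (Fin 2) (Fin 2) ℂ) where
  carrier := {f | ∃ A ∈ su2, ∀ g, f g = adAct ρ g A - A}
  add_mem' := by
    rintro f f' ⟨A, hA, hf⟩ ⟨B, hB, hf'⟩
    refine ⟨A + B, su2.add_mem hA hB, fun g => ?_⟩
    simp only [Pi.add_apply, hf g, hf' g, adAct_add]
    abel
  zero_mem' := ⟨0, su2.zero_mem, fun g => by simp [adAct]⟩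
  smul_mem' := by
    rintro c f ⟨A, hA, hf⟩
    refine ⟨c • A, su2.smul_mem c hA, fun g => ?_⟩
    simp only [Pi.smul_apply, hf g, adAct_smul, smul_sub]

/-- First group cohomology `H¹(G; su(2)_{ad ρ})`, as a real vector space. -/
def H1Ad (ρ : G →* SU2) : Type _ :=
  ↥(oneCocyclesAd ρ) ⧸ ((oneCoboundariesAd ρ).comap (oneCocyclesAd ρ).subtype)

noncomputable instance (ρ : G →* SU2) : AddCommGroup (H1Ad ρ) :=
  inferInstanceAs (AddCommGroup (↥(oneCocyclesAd ρ) ⧸ ((oneCoboundariesAd ρ).comap (oneCocyclesAd ρ).subtype)))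

noncomputable instance (ρ : G →* SU2) : Module ℝ (H1Ad ρ) :=
  inferInstanceAs (Module ℝ (↥(oneCocyclesAd ρ) ⧸ ((oneCoboundariesAd ρ).comap (oneCocyclesAd ρ).subtype)))

/-- The dimension (rank) of `H¹(G; su(2)_{ad ρ})` over `ℝ`. -/
noncomputable def h1dim (ρ : G →* SU2) : Cardinal := Module.rank ℝ (H1Ad ρ)

end CS
namespace CS

/-- The relator set of the torus knot group `⟨x, y | xᵖ = y^q⟩`. -/
def tkRel (p q : ℤ) : Set (FreeGroup (Fin 2)) :=
  {FreeGroup.of 0 ^ p * FreeGroup.of 1 ^ (-q)}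

/-- The `(p,q)` torus knot group `G_{p,q} = ⟨x, y | xᵖ y^{-q}⟩`. -/
abbrev TK (p q : ℤ) : Type := PresentedGroup (tkRel p q)

/-- The generator `x` of `G_{p,q}`. -/
def tkx (p q : ℤ) : TK p q := PresentedGroup.of 0

/-- The generator `y` of `G_{p,q}`. -/
def tky (p q : ℤ) : TK p q := PresentedGroup.of 1

/-- The meridian `μ = xᵃ yᵇ` of `G_{p,q}`. -/
def tkMu (p q a b : ℤ) : TK p q := tkx p q ^ a * tky p q ^ b

/-- The longitude `λ = xᵖ μ^{-pq}` of `G_{p,q}`. -/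
def tkLam (p q a b : ℤ) : TK p q := tkx p q ^ p * tkMu p q a b ^ (-(p * q))

lemma tk_rel_holds (p q : ℤ) : tkx p q ^ p = tky p q ^ q := by
  have hmem : FreeGroup.of (0 : Fin 2) ^ p * FreeGroup.of (1 : Fin 2) ^ (-q) ∈
      Subgroup.normalClosure (tkRel p q) :=
    Subgroup.subset_normalClosure rfl
  have h1 : PresentedGroup.mk (tkRel p q) (FreeGroup.of 0 ^ p * FreeGroup.of 1 ^ (-q)) = 1 :=
    (QuotientGroup.eq_one_iff _).mpr hmem
  have h2 : tkx p q ^ p * tky p q ^ (-q) = 1 := by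
    have := h1
    rw [_root_.map_mul, map_zpow, map_zpow] at this
    exact this
  rw [_root_.zpow_neg] at h2
  exact (mul_inv_eq_one.mp h2)

lemma tk_xp_central (p q : ℤ) (w : TK p q) : Commute (tkx p q ^ p) w := by
  have hw : w ∈ Subgroup.closure (Set.range (PresentedGroup.of : Fin 2 → TK p q)) := by
    rw [PresentedGroup.closure_range_of]; trivial
  induction hw using Subgroup.closure_induction with
  | mem z hz =>
      obtain ⟨i, rfl⟩ := hz
      fin_cases i
      · exact (Commute.refl (tkx p q)).zpow_left p
      · rw [tk_rel_holds p q]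
        exact (Commute.refl (tky p q)).zpow_left q
  | one => exact Commute.one_right _
  | mul a b _ _ ha hb => exact ha.mul_right hb
  | inv a _ ha => exact ha.inv_right

lemma tk_mu_lam_comm (p q a b : ℤ) : Commute (tkMu p q a b) (tkLam p q a b) := by
  unfold tkLam
  exact (tk_xp_central p q (tkMu p q a b)).symm.mul_right
    ((Commute.refl (tkMu p q a b)).zpow_right (-(p * q)))

end CS
namespace CS

/-- The free abelian group of rank 2, written multiplicatively. -/
abbrev Z2 : Type := Multiplicative (ℤ × ℤ)

/-- The homomorphism `ℤ² → G` sending the generators to a pair of commuting elements. -/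
def zsqHom {G : Type*} [Group G] (u v : G) (huv : Commute u v) : Z2 →* G where
  toFun z := u ^ (Multiplicative.toAdd z).1 * v ^ (Multiplicative.toAdd z).2
  map_one' := by simp
  map_mul' z w := by
    have h := (huv.zpow_zpow (Multiplicative.toAdd w).1 (Multiplicative.toAdd z).2).eq
    simp only [toAdd_mul, Prod.fst_add, Prod.snd_add, _root_.zpow_add]
    calc u ^ (Multiplicative.toAdd z).1 * u ^ (Multiplicative.toAdd w).1 *
          (v ^ (Multiplicative.toAdd z).2 * v ^ (Multiplicative.toAdd w).2)
        = u ^ (Multiplicative.toAdd z).1 *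
            (u ^ (Multiplicative.toAdd w).1 * v ^ (Multiplicative.toAdd z).2) *
            v ^ (Multiplicative.toAdd w).2 := by group
      _ = u ^ (Multiplicative.toAdd z).1 *
            (v ^ (Multiplicative.toAdd z).2 * u ^ (Multiplicative.toAdd w).1) *
            v ^ (Multiplicative.toAdd w).2 := by rw [h]
      _ = u ^ (Multiplicative.toAdd z).1 * v ^ (Multiplicative.toAdd z).2 *
            (u ^ (Multiplicative.toAdd w).1 * v ^ (Multiplicative.toAdd w).2) := by group

section Amalg

variable {A G H : Type*} [Group A] [Group G] [Group H]

/-- The normal subgroup of the free product generated by the amalgamation relations. -/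
def amalgRel (φ : A →* G) (ψ : A →* H) : Subgroup (Monoid.Coprod G H) :=
  Subgroup.normalClosure (Set.range fun a => Monoid.Coprod.inl (φ a) * (Monoid.Coprod.inr (ψ a))⁻¹)

instance amalgRel_normal (φ : A →* G) (ψ : A →* H) : (amalgRel φ ψ).Normal :=
  Subgroup.normalClosure_normal

/-- The pushout (amalgamated free product) of `φ : A → G` and `ψ : A → H`. -/
abbrev Amalg (φ : A →* G) (ψ : A →* H) : Type _ :=
  Monoid.Coprod G H ⧸ amalgRel φ ψ

/-- The canonical map `G → G *_A H`. -/
def Amalg.inl (φ : A →* G) (ψ : A →* H) : G →* Amalg φ ψ :=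
  (QuotientGroup.mk' (amalgRel φ ψ)).comp Monoid.Coprod.inl

/-- The canonical map `H → G *_A H`. -/
def Amalg.inr (φ : A →* G) (ψ : A →* H) : H →* Amalg φ ψ :=
  (QuotientGroup.mk' (amalgRel φ ψ)).comp Monoid.Coprod.inr

lemma amalg_comm (φ : A →* G) (ψ : A →* H) (a : A) :
    Amalg.inl φ ψ (φ a) = Amalg.inr φ ψ (ψ a) := by
  have hgen : Monoid.Coprod.inl (φ a) * (Monoid.Coprod.inr (ψ a))⁻¹ ∈ amalgRel φ ψ :=
    Subgroup.subset_normalClosure ⟨a, rfl⟩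
  have hinv : (Monoid.Coprod.inr (ψ a) : Monoid.Coprod G H) * (Monoid.Coprod.inl (φ a))⁻¹ ∈
      amalgRel φ ψ := by
    have := (amalgRel φ ψ).inv_mem hgen
    simpa [_root_.mul_inv_rev] using this
  have hkey : ((Monoid.Coprod.inl (φ a) : Monoid.Coprod G H))⁻¹ * Monoid.Coprod.inr (ψ a) ∈
      amalgRel φ ψ := (amalgRel_normal φ ψ).mem_comm hinv
  exact (QuotientGroup.eq (s := amalgRel φ ψ)).mpr hkey

end Amalg

/-! Specific meridians and longitudes. -/

/-- Meridian of `T(3,5)`. -/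
def mu35 : TK 3 5 := tkMu 3 5 2 (-3)
/-- Longitude of `T(3,5)`. -/
def lam35 : TK 3 5 := tkLam 3 5 2 (-3)
/-- Meridian of `T(2,7)`. -/
def mu27 : TK 2 7 := tkMu 2 7 1 (-3)
/-- Longitude of `T(2,7)`. -/
def lam27 : TK 2 7 := tkLam 2 7 1 (-3)
/-- Meridian of `T(-2,7)`. -/
def muN27 : TK (-2) 7 := tkMu (-2) 7 1 3
/-- Longitude of `T(-2,7)`. -/
def lamN27 : TK (-2) 7 := tkLam (-2) 7 1 3

/-- `φ_X : ℤ² → G_{3,5}`, `(m,n) ↦ μ_X^m λ_X^n`. -/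
def phiX : Z2 →* TK 3 5 := zsqHom mu35 lam35 (tk_mu_lam_comm 3 5 2 (-3))

lemma mu_mulLam_comm {Γ : Type*} [Group Γ] {μ ℓ : Γ} (h : Commute μ ℓ) :
    Commute μ ((μ * ℓ)⁻¹) :=
  ((Commute.refl μ).mul_right h).inv_right

/-- `φ_Y : ℤ² → G_{2,7}`, `(m,n) ↦ μ_Y^m (μ_Y λ_Y)^{-n}`. -/
def phiY : Z2 →* TK 2 7 :=
  zsqHom mu27 ((mu27 * lam27)⁻¹) (mu_mulLam_comm (tk_mu_lam_comm 2 7 1 (-3)))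

/-- `π₁(Σ₁)`, the pushout of `φ_X` and `φ_Y`. -/
abbrev Pi1Sigma1 : Type _ := Amalg phiX phiY

/-- `π₁(Z)`, the group of the complement of `T(-2,7) # T(-2,7)`:
the pushout of the two meridian inclusions `ℤ → G_{-2,7}`. -/
abbrev Pi1Z : Type _ :=
  Amalg (zpowersHom (TK (-2) 7) muN27) (zpowersHom (TK (-2) 7) muN27)

/-- The meridian of `Z`. -/
def muZ : Pi1Z := Amalg.inl _ _ muN27

/-- The longitude of `Z`: the product of the images of the two longitudes. -/
def lamZ : Pi1Z := Amalg.inl _ _ lamN27 * Amalg.inr _ _ lamN27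

lemma muZ_eq_inr : muZ = Amalg.inr (zpowersHom (TK (-2) 7) muN27) (zpowersHom (TK (-2) 7) muN27) muN27 := by
  have := amalg_comm (zpowersHom (TK (-2) 7) muN27) (zpowersHom (TK (-2) 7) muN27)
    (Multiplicative.ofAdd 1)
  simpa [muZ] using this

lemma muZ_lamZ_comm : Commute muZ lamZ := by
  have h1 : Commute muZ (Amalg.inl (zpowersHom (TK (-2) 7) muN27) (zpowersHom (TK (-2) 7) muN27) lamN27) :=
    (tk_mu_lam_comm (-2) 7 1 3).map _
  have h2 : Commute muZ (Amalg.inr (zpowersHom (TK (-2) 7) muN27) (zpowersHom (TK (-2) 7) muN27) lamN27) := by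
    rw [muZ_eq_inr]
    exact (tk_mu_lam_comm (-2) 7 1 3).map _
  exact h1.mul_right h2

/-- `ψ_X : ℤ² → G_{3,5}` (same formula as `φ_X`). -/
def psiX : Z2 →* TK 3 5 := phiX

/-- `ψ_Z : ℤ² → π₁(Z)`, `(m,n) ↦ μ_Z^m (μ_Z λ_Z)^{-n}`. -/
def psiZ : Z2 →* Pi1Z := zsqHom muZ ((muZ * lamZ)⁻¹) (mu_mulLam_comm muZ_lamZ_comm)

/-- `π₁(Σ₂)`, the pushout of `ψ_X` and `ψ_Z`. -/
abbrev Pi1Sigma2 : Type _ := Amalg psiX psiZ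

end CS
namespace CS

/-- The diagonal matrix `diag(e^{it}, e^{-it})`. -/
def diagU (t : ℝ) : Matrix (Fin 2) (Fin 2) ℂ :=
  Matrix.diagonal ![Complex.exp ((t : ℂ) * Complex.I), Complex.exp (-(t : ℂ) * Complex.I)]

lemma star_exp_I (s : ℝ) :
    star (Complex.exp ((s : ℂ) * Complex.I)) = Complex.exp (-(s : ℂ) * Complex.I) :=
  calc star (Complex.exp ((s : ℂ) * Complex.I))
      = (starRingEnd ℂ) (Complex.exp ((s : ℂ) * Complex.I)) := rfl
    _ = Complex.exp ((starRingEnd ℂ) ((s : ℂ) * Complex.I)) := (Complex.exp_conj _).symm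
    _ = Complex.exp (-(s : ℂ) * Complex.I) := by
        rw [_root_.map_mul, Complex.conj_I, Complex.conj_ofReal, mul_neg, ← neg_mul]

lemma exp_I_mul_exp_neg_I (s : ℝ) :
    Complex.exp ((s : ℂ) * Complex.I) * Complex.exp (-(s : ℂ) * Complex.I) = 1 := by
  rw [← Complex.exp_add, show (s : ℂ) * Complex.I + -(s : ℂ) * Complex.I = 0 by ring,
    Complex.exp_zero]

lemma diagU_mul (s u : ℝ) : diagU s * diagU u = diagU (s + u) := by
  unfold diagU
  rw [Matrix.diagonal_mul_diagonal, Matrix.diagonal_eq_diagonal_iff]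
  intro i
  fin_cases i
  · show Complex.exp _ * Complex.exp _ = Complex.exp _
    rw [← Complex.exp_add]; congr 1; push_cast; ring
  · show Complex.exp _ * Complex.exp _ = Complex.exp _
    rw [← Complex.exp_add]; congr 1; push_cast; ring

lemma diagU_zero : diagU 0 = 1 := by
  unfold diagU
  rw [show (![Complex.exp (((0:ℝ) : ℂ) * Complex.I), Complex.exp (-((0:ℝ) : ℂ) * Complex.I)] :
      Fin 2 → ℂ) = fun _ => 1 by funext i; fin_cases i <;> simp]
  exact Matrix.diagonal_one

lemma star_diagU (t : ℝ) : star (diagU t) = diagU (-t) := by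
  unfold diagU
  rw [Matrix.star_eq_conjTranspose, Matrix.diagonal_conjTranspose,
    Matrix.diagonal_eq_diagonal_iff]
  intro i
  fin_cases i
  · show star (Complex.exp ((t : ℂ) * Complex.I)) = Complex.exp (((-t : ℝ) : ℂ) * Complex.I)
    rw [star_exp_I t]; push_cast; ring_nf
  · show star (Complex.exp (-(t : ℂ) * Complex.I)) = Complex.exp (-((-t : ℝ) : ℂ) * Complex.I)
    rw [show -(t : ℂ) * Complex.I = ((-t : ℝ) : ℂ) * Complex.I by push_cast; ring,
      star_exp_I (-t)]

lemma diagU_mem (t : ℝ) : diagU t ∈ Matrix.specialUnitaryGroup (Fin 2) ℂ := by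
  refine Submonoid.mem_inf.mpr ⟨⟨?_, ?_⟩, ?_⟩
  · rw [star_diagU, diagU_mul, neg_add_cancel, diagU_zero]
  · rw [star_diagU, diagU_mul, add_neg_cancel, diagU_zero]
  · have : (diagU t).det = 1 := by
      unfold diagU
      rw [Matrix.det_diagonal, Fin.prod_univ_two]
      simpa using exp_I_mul_exp_neg_I t
    simpa only [MonoidHom.mem_mker, ← Matrix.coe_detMonoidHom] using this

/-- The element `diag(e^{it}, e^{-it})` of `SU(2)`. -/
def diagSU (t : ℝ) : SU2 := ⟨diagU t, diagU_mem t⟩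

lemma diagSU_comm (s t : ℝ) : Commute (diagSU s) (diagSU t) := by
  apply Subtype.ext
  show diagU s * diagU t = diagU t * diagU s
  rw [diagU_mul, diagU_mul, add_comm]

end CS
namespace CS

/-- The setoid on `A × [0,1)` collapsing `A × {0}` to a point. -/
def coneSetoid (A : Type*) : Setoid (A × (Set.Ico (0:ℝ) 1)) where
  r p q := p = q ∨ (((p.2 : ℝ) = 0) ∧ ((q.2 : ℝ) = 0))
  iseqv := by
    constructor
    · intro p; exact Or.inl rfl
    · rintro p q (rfl | ⟨h1, h2⟩)
      · exact Or.inl rfl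
      · exact Or.inr ⟨h2, h1⟩
    · rintro p q r (rfl | ⟨h1, h2⟩) h'
      · exact h'
      · rcases h' with rfl | ⟨h3, h4⟩
        · exact Or.inr ⟨h1, h2⟩
        · exact Or.inr ⟨h1, h4⟩

/-- The open cone on a space `A`: `(A × [0,1)) / (A × {0})`. -/
abbrev OpenCone (A : Type*) [TopologicalSpace A] : Type _ := Quotient (coneSetoid A)

/-- The setoid on `X ⊕ Y` identifying the two base points `x₀` and `y₀`. -/
def wedgeSetoid (X Y : Type*) (x0 : X) (y0 : Y) : Setoid (X ⊕ Y) where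
  r p q := p = q ∨ ((p = Sum.inl x0 ∨ p = Sum.inr y0) ∧ (q = Sum.inl x0 ∨ q = Sum.inr y0))
  iseqv := by
    constructor
    · intro p; exact Or.inl rfl
    · rintro p q (rfl | ⟨h1, h2⟩)
      · exact Or.inl rfl
      · exact Or.inr ⟨h2, h1⟩
    · rintro p q r (rfl | ⟨h1, h2⟩) h'
      · exact h'
      · rcases h' with rfl | ⟨h3, h4⟩
        · exact Or.inr ⟨h1, h2⟩
        · exact Or.inr ⟨h1, h4⟩

/-- The one-point union (wedge) of `X` and `Y` at the base points `x₀`, `y₀`. -/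
abbrev Wedge (X Y : Type*) [TopologicalSpace X] [TopologicalSpace Y] (x0 : X) (y0 : Y) :
    Type _ := Quotient (wedgeSetoid X Y x0 y0)

/-- The 2-sphere. -/
abbrev Sphere2 : Type _ := Metric.sphere (0 : EuclideanSpace ℝ (Fin 3)) 1

/-- The 3-torus. -/
abbrev Torus3 : Type _ := Circle × Circle × Circle

end CS

namespace CS

lemma subsingleton_abelianization_of_of_eq_one {G : Type*} [Group G]
    (h : (Abelianization.of : G →* Abelianization G) = 1) : Subsingleton (Abelianization G) := by
  have hid : MonoidHom.id (Abelianization G) = 1 :=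
    Abelianization.hom_ext _ _ (by rw [MonoidHom.id_comp, h, MonoidHom.one_comp])
  exact ⟨fun x y => by simpa using (DFunLike.congr_fun hid x).trans (DFunLike.congr_fun hid y).symm⟩

section Amalg

variable {A G H : Type*} [Group A] [Group G] [Group H]

lemma Amalg.inl_comp_eq_inr_comp (φ : A →* G) (ψ : A →* H) :
    (Amalg.inl φ ψ).comp φ = (Amalg.inr φ ψ).comp ψ :=
  MonoidHom.ext (amalg_comm φ ψ)

lemma Amalg.hom_ext {M : Type*} [Monoid M] {φ : A →* G} {ψ : A →* H} {f g : Amalg φ ψ →* M}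
    (hl : f.comp (Amalg.inl φ ψ) = g.comp (Amalg.inl φ ψ))
    (hr : f.comp (Amalg.inr φ ψ) = g.comp (Amalg.inr φ ψ)) : f = g :=
  QuotientGroup.monoidHom_ext _ (Monoid.Coprod.hom_ext hl hr)

end Amalg

lemma TK.hom_ext {p q : ℤ} {M : Type*} [Group M] {f g : TK p q →* M}
    (hx : f (tkx p q) = g (tkx p q)) (hy : f (tky p q) = g (tky p q)) : f = g :=
  PresentedGroup.ext fun i => by fin_cases i; exacts [hx, hy]

lemma eq_zero_of_gluing_relations {M : Type*} [AddCommGroup M] {a b c d : M}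
    (h1 : (3 : ℤ) • a = (5 : ℤ) • b) (h2 : (2 : ℤ) • c = (7 : ℤ) • d)
    (h3 : (2 : ℤ) • a - (3 : ℤ) • b = c - (3 : ℤ) • d)
    (h4 : (-27 : ℤ) • a + (45 : ℤ) • b = (11 : ℤ) • c - (39 : ℤ) • d) :
    a = 0 ∧ b = 0 ∧ c = 0 ∧ d = 0 := by
  -- The coefficients are the rows of the inverse of the (unimodular) coefficient matrix.
  refine ⟨?_, ?_, ?_, ?_⟩
  · linear_combination (norm := module) (42 : ℤ) • h1 + (30 : ℤ) • h2 + (5 : ℤ) • h3 + (5 : ℤ) • h4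
  · linear_combination (norm := module) (25 : ℤ) • h1 + (18 : ℤ) • h2 + (3 : ℤ) • h3 + (3 : ℤ) • h4
  · linear_combination (norm := module) (63 : ℤ) • h1 + (39 : ℤ) • h2 + (7 : ℤ) • h4
  · linear_combination (norm := module) (18 : ℤ) • h1 + (11 : ℤ) • h2 + (2 : ℤ) • h4

lemma eq_one_of_comp_phiX_eq_comp_phiY {M : Type*} [CommGroup M] {f : TK 3 5 →* M}
    {g : TK 2 7 →* M} (h : f.comp phiX = g.comp phiY) : f = 1 ∧ g = 1 := by
  have relX := congrArg (Additive.ofMul ∘ f) (tk_rel_holds 3 5)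
  have relY := congrArg (Additive.ofMul ∘ g) (tk_rel_holds 2 7)
  have gluedMu := congrArg Additive.ofMul (DFunLike.congr_fun h (Multiplicative.ofAdd (1, 0)))
  have gluedLam := congrArg Additive.ofMul (DFunLike.congr_fun h (Multiplicative.ofAdd (0, 1)))
  simp only [Function.comp_apply, phiX, phiY, zsqHom, mu35, mu27, lam35, lam27, tkMu, tkLam,
    MonoidHom.coe_comp, MonoidHom.coe_mk, OneHom.coe_mk, toAdd_ofAdd, map_mul, map_zpow, map_inv,
    zpow_zero, zpow_one, mul_one, one_mul, ofMul_mul, ofMul_zpow, ofMul_inv]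
    at relX relY gluedMu gluedLam
  obtain ⟨hx, hy, hx', hy'⟩ := eq_zero_of_gluing_relations relX relY
    (by linear_combination (norm := module) gluedMu)
    (by linear_combination (norm := module) gluedLam)
  simp only [ofMul_eq_zero] at hx hy hx' hy'
  exact ⟨TK.hom_ext hx hy, TK.hom_ext hx' hy'⟩

end CS

open CS in
/-- `Σ₁` is a homology 3-sphere: the abelianization of `π₁(Σ₁)` is trivial. -/
theorem abelianization_Pi1Sigma1_trivial : Subsingleton (Abelianization Pi1Sigma1) := by
  have glued : (Abelianization.of.comp (Amalg.inl phiX phiY)).comp phiX =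
      (Abelianization.of.comp (Amalg.inr phiX phiY)).comp phiY := by
    rw [MonoidHom.comp_assoc, MonoidHom.comp_assoc, Amalg.inl_comp_eq_inr_comp]
  obtain ⟨hl, hr⟩ := eq_one_of_comp_phiX_eq_comp_phiY glued
  apply subsingleton_abelianization_of_of_eq_one
  exact Amalg.hom_ext (by rw [hl, MonoidHom.one_comp]) (by rw [hr, MonoidHom.one_comp])
end
end

section
/- The abelianization of π₁(Σ₂) is the trivial group (i.e., Σ₂ is a homology 3-sphere). -/
open Matrix

noncomputable section

/-!
In an abelian quotient of a torus knot group `G_{p,q}` the relation `aq + bp = 1` makes the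
meridian a generator (`x ↦ μ^q`, `y ↦ μ^p`) and kills the longitude `λ = x^p μ^{-pq}`.
Hence in `H₁(Z)` the longitude `λ_Z` dies too, and the gluing `λ_X = (μ_Z λ_Z)⁻¹` forces
`μ_Z = 1`, then `μ_X = μ_Z = 1`; so every homomorphism from `π₁(Σ₂)` to an abelian group
is trivial.
-/

namespace CS

theorem Amalg.hom_eq_one {A G H P : Type*} [Group A] [Group G] [Group H] [Monoid P]
    {φ : A →* G} {ψ : A →* H} {f : Amalg φ ψ →* P}
    (hl : f.comp (Amalg.inl φ ψ) = 1) (hr : f.comp (Amalg.inr φ ψ) = 1) : f = 1 :=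
  QuotientGroup.monoidHom_ext _ <| Monoid.Coprod.hom_ext
    (hl.trans (MonoidHom.one_comp _).symm) (hr.trans (MonoidHom.one_comp _).symm)

theorem zpow_mul_zpow_zpow_eq_of_zpow_eq {G : Type*} [CommGroup G] {u v : G} {p q a b : ℤ}
    (h : u ^ p = v ^ q) (hab : a * q + b * p = 1) :
    (u ^ a * v ^ b) ^ q = u ∧ (u ^ a * v ^ b) ^ p = v := by
  constructor
  · calc (u ^ a * v ^ b) ^ q = u ^ (a * q) * (v ^ q) ^ b := by
          rw [mul_zpow, ← _root_.zpow_mul, ← _root_.zpow_mul, ← _root_.zpow_mul, mul_comm b q]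
      _ = u := by rw [← h, ← _root_.zpow_mul, ← _root_.zpow_add, mul_comm p b, hab, zpow_one]
  · calc (u ^ a * v ^ b) ^ p = (u ^ p) ^ a * v ^ (b * p) := by
          rw [mul_zpow, ← _root_.zpow_mul, ← _root_.zpow_mul, ← _root_.zpow_mul, mul_comm a p]
      _ = v := by rw [h, ← _root_.zpow_mul, ← _root_.zpow_add, mul_comm q a, hab, zpow_one]

section TorusKnot

variable {A : Type*} [CommGroup A] {p q a b : ℤ} (f : TK p q →* A)

theorem map_tkMu_zpow_eq (hab : a * q + b * p = 1) :
    f (tkMu p q a b) ^ q = f (tkx p q) ∧ f (tkMu p q a b) ^ p = f (tky p q) := by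
  rw [tkMu, map_mul, map_zpow, map_zpow]
  exact zpow_mul_zpow_zpow_eq_of_zpow_eq (by rw [← map_zpow, ← map_zpow, tk_rel_holds]) hab

theorem map_tkLam_eq_one (hab : a * q + b * p = 1) : f (tkLam p q a b) = 1 := by
  rw [tkLam, map_mul, map_zpow, map_zpow, ← (map_tkMu_zpow_eq f hab).1, mul_comm p q,
    ← _root_.zpow_mul, ← _root_.zpow_add, add_neg_cancel, zpow_zero]

theorem tk_hom_eq_one_of_map_tkMu (hab : a * q + b * p = 1) (hmu : f (tkMu p q a b) = 1) :
    f = 1 := by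
  obtain ⟨hx, hy⟩ := map_tkMu_zpow_eq f hab
  refine PresentedGroup.ext fun i => ?_
  fin_cases i
  · show f (tkx p q) = 1
    rw [← hx, hmu, _root_.one_zpow]
  · show f (tky p q) = 1
    rw [← hy, hmu, _root_.one_zpow]

end TorusKnot

section Abelian

variable {A : Type*} [CommGroup A]

theorem map_lamZ_eq_one (f : Pi1Z →* A) : f lamZ = 1 := by
  rw [lamZ, map_mul]
  have hab : (1 : ℤ) * 7 + 3 * (-2) = 1 := by norm_num
  rw [← MonoidHom.comp_apply, ← MonoidHom.comp_apply, lamN27, map_tkLam_eq_one _ hab,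
    map_tkLam_eq_one _ hab, one_mul]

theorem pi1Z_hom_eq_one_of_map_muZ (f : Pi1Z →* A) (h : f muZ = 1) : f = 1 := by
  have hab : (1 : ℤ) * 7 + 3 * (-2) = 1 := by norm_num
  refine Amalg.hom_eq_one (tk_hom_eq_one_of_map_tkMu _ hab h)
    (tk_hom_eq_one_of_map_tkMu _ hab ?_)
  rwa [muZ_eq_inr] at h

theorem pi1Sigma2_hom_eq_one (F : Pi1Sigma2 →* A) : F = 1 := by
  set fX := F.comp (Amalg.inl psiX psiZ)
  set fZ := F.comp (Amalg.inr psiX psiZ)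
  have hab : (2 : ℤ) * 5 + -3 * 3 = 1 := by norm_num
  have glue (z : Z2) : fX (psiX z) = fZ (psiZ z) := congrArg F (amalg_comm psiX psiZ z)
  have hmuZ : fZ muZ = 1 := by
    have h := glue (Multiplicative.ofAdd (0, 1))
    have hlamX : fX lam35 = 1 := map_tkLam_eq_one fX hab
    simpa [psiX, phiX, psiZ, zsqHom, hlamX, map_lamZ_eq_one, eq_comm] using h
  have hmuX : fX mu35 = 1 := by
    have h := glue (Multiplicative.ofAdd (1, 0))
    simpa [psiX, phiX, psiZ, zsqHom, hmuZ] using h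
  exact Amalg.hom_eq_one (tk_hom_eq_one_of_map_tkMu fX hab hmuX)
    (pi1Z_hom_eq_one_of_map_muZ fZ hmuZ)

end Abelian

end CS

open CS in
/-- `Σ₂` is a homology 3-sphere: the abelianization of `π₁(Σ₂)` is trivial. -/
theorem abelianization_Pi1Sigma2_trivial : Subsingleton (Abelianization Pi1Sigma2) := by
  have hid : MonoidHom.id (Abelianization Pi1Sigma2) = 1 :=
    Abelianization.hom_ext _ _ (pi1Sigma2_hom_eq_one Abelianization.of)
  exact subsingleton_of_forall_eq 1 (DFunLike.congr_fun hid)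
end
end
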